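/- Let Q be a finite nonempty state space, κ a Markov kernel from Q to Q, F ⊆ Q, and P_q the trajectory measure of the chain (X_n) started at q. Suppose there are ε > 0 and m ≥ 1 such that for every state q, P_q( ∃ k ≤ m, X_k ∈ F ) ≥ ε. Then for every start state q, the chain visits F infinitely often almost surely: P_q( { k | X_k ∈ F } is infinite ) = 1. (This is the probabilistic core of the paper's Lemma: under the composite strategy, the accepting set F of the Büchi game is visited infinitely often with probability 1.) -/

import Mathlib

open MeasureTheory ProbabilityTheory ENNReal

/-- `P` is the family of trajectory (Ionescu–Tulcea) measures of the canonical
Markov chain with transition kernel `κ` on the finite discrete state space `Q`: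
`P q` is the law of `(X₀, X₁, …)` with `X₀ = q`, characterized by its values on
the cylinder sets (which uniquely determine a measure on `ℕ → Q`). -/
def IsTrajMeasure {Q : Type*} [Fintype Q] [MeasurableSpace Q]
    [DiscreteMeasurableSpace Q] (κ : Kernel Q Q) (P : Q → Measure (ℕ → Q)) : Prop :=
  ∀ (q : Q) (n : ℕ) (w : ℕ → Q),
    P q {ω | ∀ k ≤ n, ω k = w k} =
      Set.indicator ({q} : Set Q) (1 : Q → ℝ≥0∞) (w 0) *
        ∏ i ∈ Finset.range n, κ (w i) {w (i + 1)}

/-!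
Cylinder probabilities of the trajectory measure are products of transition probabilities, so they
factor at any time `t`: this is the Markov property, and it bounds the probability of avoiding `F`
during `[n, t + m]` by `1 - ε` times that of avoiding it during `[n, t]`. Iterating, avoiding `F`
during `[n, n + N m]` has probability at most `(1 - ε) ^ N`, so almost surely `F` is visited after
every time `n`.
-/

section Paths

variable {Q : Type*}

def pathPrefix (t : ℕ) (ω : ℕ → Q) : Fin (t + 1) → Q := fun i => ω i

def pathShift (t : ℕ) (ω : ℕ → Q) : ℕ → Q := fun k => ω (t + k)

lemma pathPrefix_surjective (t : ℕ) : Function.Surjective (pathPrefix (Q := Q) t) :=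
  fun v => ⟨fun k => v ⟨min k t, by omega⟩, funext fun i => by
    simp [pathPrefix, Nat.min_eq_left (Nat.lt_succ_iff.mp i.isLt)]⟩

lemma pathPrefix_last (t : ℕ) (ω : ℕ → Q) : pathPrefix t ω (Fin.last t) = ω t := rfl

lemma pathPrefix_preimage_singleton (t : ℕ) (w : ℕ → Q) :
    pathPrefix t ⁻¹' {pathPrefix t w} = {ω | ∀ k ≤ t, ω k = w k} := by
  ext ω
  simp [pathPrefix, funext_iff, Fin.forall_iff]

lemma pathPrefix_preimage_singleton_add (t m : ℕ) (w : ℕ → Q) :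
    pathPrefix (t + m) ⁻¹' {pathPrefix (t + m) w} =
      pathPrefix t ⁻¹' {pathPrefix t w} ∩
        pathShift t ⁻¹' (pathPrefix m ⁻¹' {pathPrefix m (pathShift t w)}) := by
  simp only [pathPrefix_preimage_singleton]
  ext ω
  simp only [Set.mem_ofPred_eq, Set.mem_inter_iff, Set.mem_preimage, pathShift]
  refine ⟨fun h => ⟨fun k hk => h k (by omega), fun j hj => h _ (by omega)⟩,
    fun ⟨h₁, h₂⟩ k hk => ?_⟩
  rcases le_or_gt k t with hkt | hkt
  · exact h₁ k hkt
  · simpa [Nat.add_sub_cancel' hkt.le] using h₂ (k - t) (by omega)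

variable [MeasurableSpace Q]

lemma measurable_pathPrefix (t : ℕ) : Measurable (pathPrefix (Q := Q) t) :=
  measurable_pi_lambda _ fun _ => measurable_pi_apply _

lemma measurable_pathShift (t : ℕ) : Measurable (pathShift (Q := Q) t) :=
  measurable_pi_lambda _ fun _ => measurable_pi_apply _

noncomputable def pathWeight (κ : Kernel Q Q) (q : Q) (t : ℕ) (w : ℕ → Q) : ℝ≥0∞ :=
  ({q} : Set Q).indicator 1 (w 0) * ∏ i ∈ Finset.range t, κ (w i) {w (i + 1)}

lemma pathWeight_add (κ : Kernel Q Q) (q : Q) (t m : ℕ) (w : ℕ → Q) :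
    pathWeight κ q (t + m) w = pathWeight κ q t w * pathWeight κ (w t) m (pathShift t w) := by
  simp [pathWeight, pathShift, Finset.prod_range_add, mul_assoc, add_assoc]

end Paths

section Avoidance

variable {Q : Type*} (F : Set Q)

def avoidingPaths (n t : ℕ) : Set (ℕ → Q) := {ω | ∀ k, n ≤ k → k ≤ t → ω k ∉ F}

lemma avoidingPaths_eq_preimage (n t : ℕ) :
    avoidingPaths F n t = pathPrefix t ⁻¹' {a | ∀ i : Fin (t + 1), n ≤ i → a i ∉ F} := by
  ext ω
  simpa [avoidingPaths, pathPrefix, Fin.forall_iff] using forall_congr' fun k => imp.swap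

lemma avoidingPaths_add {n t : ℕ} (hnt : n ≤ t) (m : ℕ) :
    avoidingPaths F n (t + m) = avoidingPaths F n t ∩ pathShift t ⁻¹' avoidingPaths F 0 m := by
  ext ω
  simp only [avoidingPaths, pathShift, Set.mem_inter_iff, Set.mem_preimage, Set.mem_ofPred_eq]
  refine ⟨fun h => ⟨fun k hnk hkt => h k hnk (by omega), fun j _ hj => h _ (by omega) (by omega)⟩,
    fun ⟨h₁, h₂⟩ k hnk hkm => ?_⟩
  rcases le_or_gt k t with hkt | hkt
  · exact h₁ k hnk hkt
  · simpa [Nat.add_sub_cancel' hkt.le] using h₂ (k - t) (Nat.zero_le _) (by omega)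

variable {F} [MeasurableSpace Q] [DiscreteMeasurableSpace Q] [Finite Q]

lemma measure_avoidingPaths_zero_le {μ : Measure (ℕ → Q)} [IsProbabilityMeasure μ] {m : ℕ}
    {ε : ℝ≥0∞} (hhit : ε ≤ μ {ω | ∃ k ≤ m, ω k ∈ F}) : μ (avoidingPaths F 0 m) ≤ 1 - ε := by
  have hcompl : avoidingPaths F 0 m = {ω | ∃ k ≤ m, ω k ∈ F}ᶜ := by
    ext ω; simp [avoidingPaths]
  have hmeas : MeasurableSet {ω : ℕ → Q | ∃ k ≤ m, ω k ∈ F} := by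
    rw [← compl_compl {ω : ℕ → Q | ∃ k ≤ m, ω k ∈ F}, ← hcompl, avoidingPaths_eq_preimage]
    exact (measurable_pathPrefix m MeasurableSet.of_discrete).compl
  rw [hcompl, prob_compl_eq_one_sub hmeas]
  exact tsub_le_tsub_left hhit 1

end Avoidance

namespace IsTrajMeasure

variable {Q : Type*} [Fintype Q] [MeasurableSpace Q] [DiscreteMeasurableSpace Q]
  {κ : Kernel Q Q} {P : Q → Measure (ℕ → Q)}

lemma measure_pathPrefix_preimage (hP : IsTrajMeasure κ P) (q : Q) (t : ℕ) (w : ℕ → Q) :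
    P q (pathPrefix t ⁻¹' {pathPrefix t w}) = pathWeight κ q t w := by
  rw [pathPrefix_preimage_singleton]
  exact hP q t w

lemma measure_pathPrefix_preimage_add (hP : IsTrajMeasure κ P) (q : Q) (t m : ℕ) (w : ℕ → Q) :
    P q (pathPrefix (t + m) ⁻¹' {pathPrefix (t + m) w}) =
      P q (pathPrefix t ⁻¹' {pathPrefix t w}) *
        P (w t) (pathPrefix m ⁻¹' {pathPrefix m (pathShift t w)}) := by
  simp only [hP.measure_pathPrefix_preimage, pathWeight_add]

lemma measure_pathPrefix_singleton_inter_pathShift (hP : IsTrajMeasure κ P) (q : Q) (t m : ℕ)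
    (a : Fin (t + 1) → Q) (b : Fin (m + 1) → Q) :
    P q (pathPrefix t ⁻¹' {a} ∩ pathShift t ⁻¹' (pathPrefix m ⁻¹' {b})) =
      P q (pathPrefix t ⁻¹' {a}) * P (a (Fin.last t)) (pathPrefix m ⁻¹' {b}) := by
  obtain ⟨w, rfl⟩ := pathPrefix_surjective t a
  obtain ⟨w', rfl⟩ := pathPrefix_surjective m b
  rw [pathPrefix_last]
  by_cases hw : w' 0 = w t
  · set g : ℕ → Q := fun k => if k ≤ t then w k else w' (k - t)
    have hg : pathPrefix t g = pathPrefix t w :=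
      funext fun i => if_pos (Nat.lt_succ_iff.mp i.isLt)
    have hg' : pathPrefix m (pathShift t g) = pathPrefix m w' := by
      funext ⟨j, _⟩
      rcases j with _ | j
      · simp [pathPrefix, pathShift, g, hw]
      · simp [pathPrefix, pathShift, g]
    have hgt : g t = w t := if_pos le_rfl
    rw [← hg, ← hg', ← pathPrefix_preimage_singleton_add, hP.measure_pathPrefix_preimage_add, hgt]
  · have hdisjoint : pathPrefix t ⁻¹' {pathPrefix t w} ∩
        pathShift t ⁻¹' (pathPrefix m ⁻¹' {pathPrefix m w'}) = ∅ := by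
      simp only [pathPrefix_preimage_singleton]
      ext ω
      simp only [Set.mem_inter_iff, Set.mem_preimage, Set.mem_ofPred_eq, Set.mem_empty_iff_false,
        iff_false, not_and, not_forall]
      intro h
      exact ⟨0, Nat.zero_le m, fun h' => hw (by simpa [pathShift, h t le_rfl] using h'.symm)⟩
    have hzero : P (w t) (pathPrefix m ⁻¹' {pathPrefix m w'}) = 0 := by
      simp [hP.measure_pathPrefix_preimage, pathWeight, hw]
    rw [hdisjoint, hzero, measure_empty, mul_zero]

lemma measure_pathPrefix_preimage_inter_pathShift (hP : IsTrajMeasure κ P) (q : Q) (t m : ℕ)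
    (S : Finset (Fin (t + 1) → Q)) (T : Finset (Fin (m + 1) → Q)) :
    P q (pathPrefix t ⁻¹' S ∩ pathShift t ⁻¹' (pathPrefix m ⁻¹' T)) =
      ∑ a ∈ S, P q (pathPrefix t ⁻¹' {a}) * P (a (Fin.last t)) (pathPrefix m ⁻¹' T) := by
  set f : (ℕ → Q) → (Fin (t + 1) → Q) × (Fin (m + 1) → Q) :=
    fun ω => (pathPrefix t ω, pathPrefix m (pathShift t ω))
  have hf : Measurable f :=
    (measurable_pathPrefix t).prodMk ((measurable_pathPrefix m).comp (measurable_pathShift t))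
  have hfiber (a b) : f ⁻¹' {(a, b)} =
      pathPrefix t ⁻¹' {a} ∩ pathShift t ⁻¹' (pathPrefix m ⁻¹' {b}) := by
    ext ω; simp [f]
  have hset : pathPrefix t ⁻¹' S ∩ pathShift t ⁻¹' (pathPrefix m ⁻¹' T) = f ⁻¹' ↑(S ×ˢ T) := by
    ext ω; simp [f]
  rw [hset, ← sum_measure_preimage_singleton _ fun _ _ => hf (measurableSet_singleton _),
    Finset.sum_product]
  refine Finset.sum_congr rfl fun a _ => ?_
  simp only [hfiber, hP.measure_pathPrefix_singleton_inter_pathShift, ← Finset.mul_sum]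
  rw [sum_measure_preimage_singleton _ fun _ _ => measurable_pathPrefix m (measurableSet_singleton _)]

lemma measure_pathPrefix_preimage_inter_pathShift_le (hP : IsTrajMeasure κ P) {m : ℕ}
    {T : Set (Fin (m + 1) → Q)} {c : ℝ≥0∞} (hc : ∀ q, P q (pathPrefix m ⁻¹' T) ≤ c)
    (q : Q) (t : ℕ) (S : Set (Fin (t + 1) → Q)) :
    P q (pathPrefix t ⁻¹' S ∩ pathShift t ⁻¹' (pathPrefix m ⁻¹' T)) ≤
      c * P q (pathPrefix t ⁻¹' S) := by
  classical
  have hmarkov := hP.measure_pathPrefix_preimage_inter_pathShift q t m S.toFinset T.toFinset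
  simp only [Set.coe_toFinset] at hmarkov
  calc P q (pathPrefix t ⁻¹' S ∩ pathShift t ⁻¹' (pathPrefix m ⁻¹' T))
      ≤ ∑ a ∈ S.toFinset, P q (pathPrefix t ⁻¹' {a}) * c :=
        hmarkov.trans_le (Finset.sum_le_sum fun a _ => mul_le_mul_right (hc _) _)
    _ = c * P q (pathPrefix t ⁻¹' S) := by
        rw [← Finset.sum_mul, sum_measure_preimage_singleton _
          fun _ _ => measurable_pathPrefix t (measurableSet_singleton _), Set.coe_toFinset, mul_comm]

lemma measure_avoidingPaths_add_le (hP : IsTrajMeasure κ P) {F : Set Q} {m : ℕ} {c : ℝ≥0∞}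
    (hc : ∀ q, P q (avoidingPaths F 0 m) ≤ c) (q : Q) {n t : ℕ} (hnt : n ≤ t) :
    P q (avoidingPaths F n (t + m)) ≤ c * P q (avoidingPaths F n t) := by
  simp only [avoidingPaths_eq_preimage] at hc
  rw [avoidingPaths_add F hnt, avoidingPaths_eq_preimage, avoidingPaths_eq_preimage F 0]
  exact hP.measure_pathPrefix_preimage_inter_pathShift_le hc q t _

lemma measure_avoidingPaths_le_pow [∀ q, IsProbabilityMeasure (P q)] (hP : IsTrajMeasure κ P)
    {F : Set Q} {m : ℕ} {c : ℝ≥0∞} (hc : ∀ q, P q (avoidingPaths F 0 m) ≤ c) (q : Q)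
    (n N : ℕ) : P q (avoidingPaths F n (n + N * m)) ≤ c ^ N := by
  induction N with
  | zero => simpa using prob_le_one
  | succ N ih =>
    calc P q (avoidingPaths F n (n + (N + 1) * m))
        = P q (avoidingPaths F n (n + N * m + m)) := by rw [add_mul, one_mul, add_assoc]
      _ ≤ c * P q (avoidingPaths F n (n + N * m)) :=
        hP.measure_avoidingPaths_add_le hc q (Nat.le_add_right n _)
      _ ≤ c ^ (N + 1) := by rw [pow_succ']; gcongr

lemma ae_exists_ge_mem [∀ q, IsProbabilityMeasure (P q)] (hP : IsTrajMeasure κ P)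
    {F : Set Q} {m : ℕ} {c : ℝ≥0∞} (hc1 : c < 1) (hc : ∀ q, P q (avoidingPaths F 0 m) ≤ c)
    (q : Q) (n : ℕ) : ∀ᵐ ω ∂P q, ∃ k ≥ n, ω k ∈ F := by
  rw [ae_iff]
  refine le_antisymm (ge_of_tendsto' (ENNReal.tendsto_pow_atTop_nhds_zero_of_lt_one hc1)
    fun N => ?_) zero_le
  refine (measure_mono fun ω hω k hnk _ => ?_).trans (hP.measure_avoidingPaths_le_pow hc q n N)
  exact fun hk => hω ⟨k, hnk, hk⟩

end IsTrajMeasure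

theorem traj_visits_infinitely_often_general {Q : Type*} [Fintype Q]
    [MeasurableSpace Q] [DiscreteMeasurableSpace Q]
    (κ : Kernel Q Q)
    (P : Q → Measure (ℕ → Q)) (hprob : ∀ q, IsProbabilityMeasure (P q))
    (hP : IsTrajMeasure κ P) (F : Set Q)
    (ε : ℝ≥0∞) (hε : 0 < ε) (m : ℕ)
    (hhit : ∀ q : Q, ε ≤ P q {ω | ∃ k ≤ m, ω k ∈ F}) :
    ∀ q : Q, P q {ω | {k : ℕ | ω k ∈ F}.Infinite} = 1 := by
  intro q
  have hc1 : 1 - ε < 1 := ENNReal.sub_lt_self one_ne_top one_ne_zero hε.ne'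
  have hc (q : Q) : P q (avoidingPaths F 0 m) ≤ 1 - ε :=
    measure_avoidingPaths_zero_le (hhit q)
  have hae : ∀ᵐ ω ∂P q, {k : ℕ | ω k ∈ F}.Infinite :=
    (ae_all_iff.2 (hP.ae_exists_ge_mem hc1 hc q)).mono fun ω h =>
      Nat.frequently_atTop_iff_infinite.1 (Filter.frequently_atTop.2 h)
  exact (measure_congr (ae_eq_univ.2 hae)).trans measure_univ

/-- If from every state the chain hits the accepting set `F`
within `m` steps with probability at least `ε > 0`, then from every start state
the chain visits `F` infinitely often almost surely:
`P q ({k | X k ∈ F} is infinite) = 1`. -/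
theorem traj_visits_infinitely_often {Q : Type*} [Fintype Q] [Nonempty Q]
    [MeasurableSpace Q] [DiscreteMeasurableSpace Q]
    (κ : Kernel Q Q) [IsMarkovKernel κ]
    (P : Q → Measure (ℕ → Q)) (hprob : ∀ q, IsProbabilityMeasure (P q))
    (hP : IsTrajMeasure κ P) (F : Set Q)
    (ε : ℝ≥0∞) (hε : 0 < ε) (m : ℕ) (hm : 1 ≤ m)
    (hhit : ∀ q : Q, ε ≤ P q {ω | ∃ k ≤ m, ω k ∈ F}) :
    ∀ q : Q, P q {ω | {k : ℕ | ω k ∈ F}.Infinite} = 1 :=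
  traj_visits_infinitely_often_general κ P hprob hP F ε hε m hhit
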